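/- arXiv:1203.2939 — 2 statements merged into one kernel-verified Lean document; each statement's English description precedes it below -/
import Mathlib

section
/- Let n ≥ 1 and let Z = (z_1, …, z_n) ∈ ℤ^n with z_i ≠ 0 for all i and z_i < z_{i+1}. If two Gauss diagrams G and G' are related by a single chord move, a two chord move, or a triangle move (and hence if they are related by any finite sequence of chord moves), then |A_Z(G)| = |A_Z(G')|. -/
/-! ## Gauss diagrams and parity -/

/-- `arc a b p` : position `p` lies strictly inside the arc traversed in the positive
direction from `a` to `b` on a circle whose positions are numbered `0, 1, 2, …`
in the positive direction. -/
def arc (a b p : ℕ) : Bool :=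
  if a < b then decide (a < p ∧ p < b) else decide (p < b ∨ a < p)

/-- A Gauss diagram: `n` signed oriented chords whose `2n` endpoints are placed on the
`2n` points of an oriented circle.  Chord `i` has its head (arrowhead) at position
`head i`, its foot at position `foot i`, and sign `sign i`. -/
structure GaussDiagram where
  n : ℕ
  head : Fin n → Fin (2 * n)
  foot : Fin n → Fin (2 * n)
  sign : Fin n → ℤ

namespace GaussDiagram

/-- A genuine Gauss diagram: all `2n` endpoints are distinct (hence they exhaust the
`2n` circle positions) and every sign is `±1`. -/
def Proper (G : GaussDiagram) : Prop :=
  Function.Injective (Sum.elim G.head G.foot) ∧ ∀ i, G.sign i = 1 ∨ G.sign i = -1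

/-- `G.crosses c x` : chord `x` intersects chord `c` (their endpoint pairs interleave
in the cyclic order), i.e. `x ∈ N_c`. -/
def crosses (G : GaussDiagram) (c x : Fin G.n) : Bool :=
  x != c &&
    (arc (G.head c).1 (G.foot c).1 (G.head x).1 != arc (G.head c).1 (G.foot c).1 (G.foot x).1)

/-- The intersection number `int_c(x)`: `+1` if the head of `x` lies on the arc traversed
in the positive direction from the head of `c` to the foot of `c`, and `-1` otherwise. -/
def inter (G : GaussDiagram) (c x : Fin G.n) : ℤ :=
  if arc (G.head c).1 (G.foot c).1 (G.head x).1 then 1 else -1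

/-- The parity of a chord: `p(c) = ∑_{x ∈ N_c} sgn(x) · int_c(x)`. -/
def parity (G : GaussDiagram) (c : Fin G.n) : ℤ :=
  ∑ x : Fin G.n, if G.crosses c x then G.sign x * G.inter c x else 0

end GaussDiagram

/-- The cyclic successor of a circle position. -/
def psucc {m : ℕ} (v : Fin m) : Fin m := ⟨(v.1 + 1) % m, Nat.mod_lt _ v.pos⟩

/-- Two circle positions are adjacent. -/
def adjPos {m : ℕ} (u v : Fin m) : Prop := v = psucc u ∨ u = psucc v

/-- A map of circle positions preserving the cyclic order (in particular injective). -/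
def CyclicMap {k l : ℕ} (φ : Fin k → Fin l) : Prop :=
  ∀ a b p : Fin k, arc a.1 b.1 p.1 = arc (φ a).1 (φ b).1 (φ p).1

/-- A map of circle positions reversing the cyclic order. -/
def AntiCyclicMap {k l : ℕ} (φ : Fin k → Fin l) : Prop :=
  ∀ a b p : Fin k, arc a.1 b.1 p.1 = arc (φ b).1 (φ a).1 (φ p).1

/-! ## The chord moves -/

/-- The single chord move: `G'` is obtained from `G` by inserting one chord `y` whose two
endpoints occupy adjacent positions on the circle; all old chords keep their mutual cyclic
position (via the cyclic-order preserving map `φ`), their orientation and their sign. -/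
def SingleChordMove (G G' : GaussDiagram) : Prop :=
  G.Proper ∧ G'.Proper ∧ G'.n = G.n + 1 ∧
  ∃ (e : Fin G.n → Fin G'.n) (φ : Fin (2 * G.n) → Fin (2 * G'.n)) (y : Fin G'.n),
    Function.Injective e ∧ (∀ i, e i ≠ y) ∧ CyclicMap φ ∧
    (∀ i, G'.head (e i) = φ (G.head i) ∧ G'.foot (e i) = φ (G.foot i) ∧
      G'.sign (e i) = G.sign i) ∧
    adjPos (G'.head y) (G'.foot y)

/-- The two chord move: `G'` is obtained from `G` by inserting a pair of oppositely signed
chords `y₁, y₂` whose heads occupy adjacent positions and whose feet occupy adjacent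
positions on the circle. -/
def TwoChordMove (G G' : GaussDiagram) : Prop :=
  G.Proper ∧ G'.Proper ∧ G'.n = G.n + 2 ∧
  ∃ (e : Fin G.n → Fin G'.n) (φ : Fin (2 * G.n) → Fin (2 * G'.n)) (y₁ y₂ : Fin G'.n),
    Function.Injective e ∧ y₁ ≠ y₂ ∧ (∀ i, e i ≠ y₁ ∧ e i ≠ y₂) ∧ CyclicMap φ ∧
    (∀ i, G'.head (e i) = φ (G.head i) ∧ G'.foot (e i) = φ (G.foot i) ∧
      G'.sign (e i) = G.sign i) ∧
    adjPos (G'.head y₁) (G'.head y₂) ∧ adjPos (G'.foot y₁) (G'.foot y₂) ∧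
    G'.sign y₁ = -G'.sign y₂

/-- The triangle (vertex) structure of three chords `x y z` of `G`: their six endpoints
form three pairs of adjacent circle positions (the vertices of a triangle), namely
`{w₁, w₁+1}` (two heads), `{w₂, w₂+1}` (two feet) and `{w₃, w₃+1}` (a head and a foot).
Chord `x` runs from the head–head vertex to the foot–foot vertex. -/
def TriangleVertices (G : GaussDiagram) (x y z : Fin G.n) (w₁ w₂ w₃ : Fin (2 * G.n)) : Prop :=
  x ≠ y ∧ y ≠ z ∧ x ≠ z ∧
  ((G.head x = w₁ ∧ G.head y = psucc w₁) ∨ (G.head x = psucc w₁ ∧ G.head y = w₁)) ∧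
  ((G.foot x = w₂ ∧ G.foot z = psucc w₂) ∨ (G.foot x = psucc w₂ ∧ G.foot z = w₂)) ∧
  ((G.foot y = w₃ ∧ G.head z = psucc w₃) ∨ (G.foot y = psucc w₃ ∧ G.head z = w₃))

/-- The admissible sign configurations for a triangle move on the chords `x y z`
(`x` being the chord joining the head–head vertex to the foot–foot vertex):
these are the configurations exhibited in the paper together with their modifications
obtained by simultaneously reversing the sign and orientation of the two chords meeting
at the head–head vertex or at the foot–foot vertex.
In the (3,0) case the two chords `y, z` carry one sign and `x` the opposite sign; in the
(2,1) case the signs are governed by the pair of chords crossing on the one-intersection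
side of the move. -/
def AdmissibleSigns (G G' : GaussDiagram) (x y z : Fin G.n) (x' y' z' : Fin G'.n) : Prop :=
  -- (3,0) triangle move
  (((G.crosses x y = false ∧ G.crosses y z = false ∧ G.crosses x z = false) ∨
    (G'.crosses x' y' = false ∧ G'.crosses y' z' = false ∧ G'.crosses x' z' = false)) ∧
    G.sign y = G.sign z ∧ G.sign x = -G.sign y) ∨
  -- (2,1) triangle move, the single intersection being between x and y
  (((G.crosses x y = true ∧ G.crosses y z = false ∧ G.crosses x z = false) ∨
    (G'.crosses x' y' = true ∧ G'.crosses y' z' = false ∧ G'.crosses x' z' = false)) ∧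
    G.sign y = -G.sign x ∧ G.sign z = G.sign x) ∨
  -- (2,1) triangle move, the single intersection being between x and z
  (((G.crosses x z = true ∧ G.crosses x y = false ∧ G.crosses y z = false) ∨
    (G'.crosses x' z' = true ∧ G'.crosses x' y' = false ∧ G'.crosses y' z' = false)) ∧
    G.sign z = -G.sign x ∧ G.sign y = G.sign x) ∨
  -- (2,1) triangle move, the single intersection being between y and z
  (((G.crosses y z = true ∧ G.crosses x y = false ∧ G.crosses x z = false) ∨
    (G'.crosses y' z' = true ∧ G'.crosses x' y' = false ∧ G'.crosses x' z' = false)) ∧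
    G.sign y = G.sign x ∧ G.sign z = G.sign x)

/-- The triangle move: three chords `x y z` of `G` forming a triangle with three
adjacent-position vertices (one head–head, one foot–foot, one mixed), in an admissible
sign/orientation configuration, slide past each other: in `G'` each pair of adjacent
endpoints has been interchanged, while everything else is unchanged. -/
def TriangleMove (G G' : GaussDiagram) : Prop :=
  G.Proper ∧ G'.Proper ∧
  ∃ (e : Fin G.n → Fin G'.n) (φ : Fin (2 * G.n) → Fin (2 * G'.n))
    (x y z : Fin G.n) (w₁ w₂ w₃ : Fin (2 * G.n)),
    Function.Bijective e ∧ Function.Bijective φ ∧ CyclicMap φ ∧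
    TriangleVertices G x y z w₁ w₂ w₃ ∧
    (∀ i, G'.sign (e i) = G.sign i) ∧
    (∀ i, i ≠ x → i ≠ y → i ≠ z →
      G'.head (e i) = φ (G.head i) ∧ G'.foot (e i) = φ (G.foot i)) ∧
    -- sliding: each of the six endpoints is exchanged with its partner in its vertex pair
    ((G'.head (e x) = φ (G.head y) ∧ G'.head (e y) = φ (G.head x)) ∧
     (G'.foot (e x) = φ (G.foot z) ∧ G'.foot (e z) = φ (G.foot x)) ∧
     (G'.foot (e y) = φ (G.head z) ∧ G'.head (e z) = φ (G.foot y))) ∧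
    AdmissibleSigns G G' x y z (e x) (e y) (e z)

/-- One chord move (in either direction) between Gauss diagrams. -/
def GaussMove (G G' : GaussDiagram) : Prop :=
  SingleChordMove G G' ∨ SingleChordMove G' G ∨
  TwoChordMove G G' ∨ TwoChordMove G' G ∨
  TriangleMove G G' ∨ TriangleMove G' G

/-! ## Invariants from parity -/

namespace GaussDiagram

/-- `|A_i(G)|`: the signed cardinality of the set of chords of parity `i`. -/
def cardA (G : GaussDiagram) (i : ℤ) : ℤ :=
  ∑ c : Fin G.n, if G.parity c = i then G.sign c else 0

/-- `|A_Z(G)|`: the signed cardinality of the set of tuples of chords with parities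
prescribed by `Z`. -/
def cardATuple (G : GaussDiagram) {k : ℕ} (Z : Fin k → ℤ) : ℤ :=
  ∑ t : Fin k → Fin G.n,
    if ∀ j, G.parity (t j) = Z j then ∏ j, G.sign (t j) else 0

/-- `|V_i(G)|`: the signed cardinality of the set of chords whose parity has absolute
value `i`. -/
def cardV (G : GaussDiagram) (i : ℤ) : ℤ :=
  ∑ c : Fin G.n, if |G.parity c| = i then G.sign c else 0

/-- `|V_Z(G)|`: the signed cardinality of the set of tuples of chords whose parities have
absolute values prescribed by `Z`. -/
def cardVTuple (G : GaussDiagram) {k : ℕ} (Z : Fin k → ℤ) : ℤ :=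
  ∑ t : Fin k → Fin G.n,
    if ∀ j, |G.parity (t j)| = Z j then ∏ j, G.sign (t j) else 0

/-- Flip (reverse the orientation of and negate the sign of) every chord in `S`;
this corresponds to crossing changes in the corresponding virtual knot diagram. -/
def flipSet (G : GaussDiagram) (S : Finset (Fin G.n)) : GaussDiagram where
  n := G.n
  head := fun i => if i ∈ S then G.foot i else G.head i
  foot := fun i => if i ∈ S then G.head i else G.foot i
  sign := fun i => if i ∈ S then -G.sign i else G.sign i

end GaussDiagram

/-! ## Smoothing and flat diagrams -/

/-- The chord of the smaller diagram indexed by `i` corresponds to the chord `skipAt x i`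
of the original diagram (skipping the smoothed chord `x`). -/
def skipAt {n : ℕ} (x : Fin n) (i : Fin (n - 1)) : Fin n :=
  if h : i.1 < x.1 then ⟨i.1, lt_trans h x.2⟩ else ⟨i.1 + 1, by have := i.2; omega⟩

/-- Relabelling of the circle positions after vertically smoothing the chord with head at
position `h` and foot at position `f` (on a circle with `m` positions): the two positions
`h` and `f` are deleted and the arc strictly between `h` and `f` is reversed. -/
def smoothPos (m h f p : ℕ) : ℕ :=
  let d := (f + m - (h + 1)) % m
  let r := (p + m - (h + 1)) % m
  if r < d then d - 1 - r else r - 1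

/-- Vertical smoothing of the chord `x` of a Gauss diagram: the chord `x` is deleted and
the cyclic order of the arc of endpoints lying strictly between the two endpoints of `x`
is reversed. -/
def GaussDiagram.smooth (G : GaussDiagram) (x : Fin G.n) : GaussDiagram where
  n := G.n - 1
  head := fun i =>
    ⟨smoothPos (2 * G.n) (G.head x).1 (G.foot x).1 (G.head (skipAt x i)).1 % (2 * (G.n - 1)),
      Nat.mod_lt _ (by have := i.2; omega)⟩
  foot := fun i =>
    ⟨smoothPos (2 * G.n) (G.head x).1 (G.foot x).1 (G.foot (skipAt x i)).1 % (2 * (G.n - 1)),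
      Nat.mod_lt _ (by have := i.2; omega)⟩
  sign := fun i => G.sign (skipAt x i)

/-- The index of chord `i ≠ x` in the diagram obtained by smoothing the chord `x`. -/
def unskip? {n : ℕ} (x i : Fin n) : Option (Fin (n - 1)) :=
  if h : i.1 < x.1 then some ⟨i.1, by have := x.2; omega⟩
  else if h' : x.1 < i.1 then some ⟨i.1 - 1, by have := i.2; omega⟩
  else none

/-- Smoothing a list of chords, one after the other. -/
def GaussDiagram.smoothList : (G : GaussDiagram) → List (Fin G.n) → GaussDiagram
  | G, [] => G
  | G, x :: xs => (G.smooth x).smoothList (xs.filterMap (unskip? x))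
termination_by G l => l.length
decreasing_by simpa using Nat.lt_succ_of_le (List.length_filterMap_le _ _)

/-- A flat Gauss diagram: a chord diagram on the circle with no signs and no head/foot
designations. -/
structure FlatDiagram where
  n : ℕ
  fst : Fin n → Fin (2 * n)
  snd : Fin n → Fin (2 * n)

namespace FlatDiagram

/-- A genuine flat diagram: the `2n` endpoints are distinct. -/
def Proper (F : FlatDiagram) : Prop := Function.Injective (Sum.elim F.fst F.snd)

/-- The (unordered) endpoints of the chord `y` are `u` and `v`. -/
def hasEnds (F : FlatDiagram) (y : Fin F.n) (u v : Fin (2 * F.n)) : Prop :=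
  (F.fst y = u ∧ F.snd y = v) ∨ (F.fst y = v ∧ F.snd y = u)

end FlatDiagram

/-- Forgetting all signs and head/foot designations of a Gauss diagram. -/
def GaussDiagram.flatten (G : GaussDiagram) : FlatDiagram := ⟨G.n, G.head, G.foot⟩

/-- Isomorphism of flat diagrams: a bijection of chords induced by a bijection of the
circle preserving (or reversing) the cyclic order. -/
def FlatIso (F F' : FlatDiagram) : Prop :=
  ∃ (e : Fin F.n → Fin F'.n) (φ : Fin (2 * F.n) → Fin (2 * F'.n)),
    Function.Bijective e ∧ Function.Bijective φ ∧ (CyclicMap φ ∨ AntiCyclicMap φ) ∧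
    ∀ i, F'.hasEnds (e i) (φ (F.fst i)) (φ (F.snd i))

/-- Flat single chord move: insertion of a chord with adjacent endpoints. -/
def FlatSingleMove (F F' : FlatDiagram) : Prop :=
  F.Proper ∧ F'.Proper ∧ F'.n = F.n + 1 ∧
  ∃ (e : Fin F.n → Fin F'.n) (φ : Fin (2 * F.n) → Fin (2 * F'.n)) (y : Fin F'.n),
    Function.Injective e ∧ (∀ i, e i ≠ y) ∧ CyclicMap φ ∧
    (∀ i, F'.hasEnds (e i) (φ (F.fst i)) (φ (F.snd i))) ∧
    adjPos (F'.fst y) (F'.snd y)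

/-- Flat two chord move: insertion of a parallel pair of chords with pairwise adjacent
endpoints. -/
def FlatTwoMove (F F' : FlatDiagram) : Prop :=
  F.Proper ∧ F'.Proper ∧ F'.n = F.n + 2 ∧
  ∃ (e : Fin F.n → Fin F'.n) (φ : Fin (2 * F.n) → Fin (2 * F'.n)) (y₁ y₂ : Fin F'.n)
    (p q : Fin (2 * F'.n)),
    Function.Injective e ∧ y₁ ≠ y₂ ∧ (∀ i, e i ≠ y₁ ∧ e i ≠ y₂) ∧ CyclicMap φ ∧
    (∀ i, F'.hasEnds (e i) (φ (F.fst i)) (φ (F.snd i))) ∧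
    F'.hasEnds y₁ p q ∧ F'.hasEnds y₂ (psucc p) (psucc q)

/-- Flat triangle move: three chords whose six endpoints form three adjacent-position
vertex pairs slide past each other (no sign or orientation conditions). -/
def FlatTriangleMove (F F' : FlatDiagram) : Prop :=
  F.Proper ∧ F'.Proper ∧
  ∃ (e : Fin F.n → Fin F'.n) (φ : Fin (2 * F.n) → Fin (2 * F'.n))
    (x y z : Fin F.n) (w₁ w₂ w₃ α₁ β₁ α₂ β₂ α₃ β₃ : Fin (2 * F.n)),
    Function.Bijective e ∧ Function.Bijective φ ∧ CyclicMap φ ∧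
    x ≠ y ∧ y ≠ z ∧ x ≠ z ∧
    ((α₁ = w₁ ∧ β₁ = psucc w₁) ∨ (α₁ = psucc w₁ ∧ β₁ = w₁)) ∧
    ((α₂ = w₂ ∧ β₂ = psucc w₂) ∨ (α₂ = psucc w₂ ∧ β₂ = w₂)) ∧
    ((α₃ = w₃ ∧ β₃ = psucc w₃) ∨ (α₃ = psucc w₃ ∧ β₃ = w₃)) ∧
    F.hasEnds x α₁ α₂ ∧ F.hasEnds y β₁ α₃ ∧ F.hasEnds z β₂ β₃ ∧
    F'.hasEnds (e x) (φ β₁) (φ β₂) ∧ F'.hasEnds (e y) (φ α₁) (φ β₃) ∧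
    F'.hasEnds (e z) (φ α₂) (φ α₃) ∧
    (∀ i, i ≠ x → i ≠ y → i ≠ z → F'.hasEnds (e i) (φ (F.fst i)) (φ (F.snd i)))

/-- Generating relation for flat equivalence of flat diagrams. -/
def FlatRel (F F' : FlatDiagram) : Prop :=
  FlatIso F F' ∨ FlatSingleMove F F' ∨ FlatSingleMove F' F ∨
  FlatTwoMove F F' ∨ FlatTwoMove F' F ∨ FlatTriangleMove F F' ∨ FlatTriangleMove F' F

/-- Flat equivalence classes of flat Gauss diagrams. -/
def FlatClass : Type := Quot FlatRel

/-- The flat equivalence class of a flat diagram. -/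
def Fclass (F : FlatDiagram) : FlatClass := Quot.mk _ F

/-! ## The invariants `S_i` and `S_Z` -/

/-- `S_i(G) = ∑_{x ∈ V_i(G)} sgn(x) · F(G^x)`, an element of the free ℤ-module on flat
equivalence classes of flat Gauss diagrams. -/
noncomputable def Sone (G : GaussDiagram) (i : ℤ) : FlatClass →₀ ℤ :=
  ∑ x : Fin G.n,
    if |G.parity x| = i then
      Finsupp.single (Fclass (G.smooth x).flatten) (G.sign x)
    else 0

/-- `S_Z(G) = ∑_{x̄ ∈ V_Z(G)} sgn(x₁)⋯sgn(x_n) · F(G^{x̄})`, an element of the free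
ℤ-module on flat equivalence classes of flat Gauss diagrams. -/
noncomputable def SZ (G : GaussDiagram) {k : ℕ} (Z : Fin k → ℤ) : FlatClass →₀ ℤ :=
  ∑ t : Fin k → Fin G.n,
    if ∀ j, |G.parity (t j)| = Z j then
      Finsupp.single (Fclass (G.smoothList (List.ofFn t)).flatten) (∏ j, G.sign (t j))
    else 0

/-!
Expanding the product of sums gives `|A_Z(G)| = ∏ⱼ |A_{z_j}(G)|`, so it suffices that the signed
number `|A_i(G)|` of chords of parity `i ≠ 0` is invariant. The summand of `p(c)` indexed by `t`
is `sgn(t)` times the signed number of endpoints of `t` inside the arc from the head to the foot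
of `c`, which depends only on the cyclic order of the endpoints of `c` and `t`.

A single chord move adds a chord of parity `0` contributing nothing to the other parities. A two
chord move adds two parallel chords of equal parity and opposite signs, whose contributions
cancel. A triangle move interchanges three pairs of adjacent endpoints; this changes no
contribution except those among the three triangle chords, and once the head–head vertex is
rotated to the positions `0, 1`, a check of the sixteen possible configurations shows that the
admissible signs balance these, so that no parity changes.
-/

/-- The signed number of endpoints of the chord `(c, d)` strictly inside the arc from `a` to `b`:
for a chord whose endpoints differ from `a, b` it is `± s` exactly when it crosses `(a, b)`. -/
def arcWeight (s : ℤ) (a b c d : ℕ) : ℤ :=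
  s * ((if arc a b c then 1 else 0) - (if arc a b d then 1 else 0))

@[simp]
lemma arc_left_self (a b : ℕ) : arc a b a = false := by
  unfold arc; split_ifs <;> simp_all

@[simp]
lemma arc_right_self (a b : ℕ) : arc a b b = false := by
  unfold arc; split_ifs <;> simp_all

lemma arcWeight_congr {a b c d a' b' c' d' : ℕ} (s : ℤ) (hc : arc a b c = arc a' b' c')
    (hd : arc a b d = arc a' b' d') : arcWeight s a b c d = arcWeight s a' b' c' d' := by
  rw [arcWeight, hc, hd, arcWeight]

lemma arcWeight_eq_zero {a b c d : ℕ} (s : ℤ) (h : arc a b c = arc a b d) :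
    arcWeight s a b c d = 0 := by
  rw [arcWeight, h, sub_self, mul_zero]

/-- `int_c(x) = -int_x(c)` for crossing chords `c` and `x`. -/
lemma arcWeight_swap {a b c d : ℕ} (s : ℤ) (hac : a ≠ c) (had : a ≠ d) (hbc : b ≠ c)
    (hbd : b ≠ d) : arcWeight s a b c d = -arcWeight s c d a b := by
  unfold arcWeight arc
  split_ifs <;> simp only [decide_eq_true_eq] at * <;> omega

lemma psucc_val {m : ℕ} (v : Fin m) : (psucc v).1 = if v.1 + 1 = m then 0 else v.1 + 1 := by
  have := v.2
  unfold psucc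
  split_ifs with h
  · simp [h]
  · exact Nat.mod_eq_of_lt (by omega)

lemma adjPos.symm {m : ℕ} {u v : Fin m} (h : adjPos u v) : adjPos v u := Or.symm h

lemma adjPos.val_cases {m : ℕ} {u v : Fin m} (h : adjPos u v) :
    v.1 = u.1 + 1 ∨ u.1 = v.1 + 1 ∨ (v.1 = 0 ∧ u.1 + 1 = m) ∨ (u.1 = 0 ∧ v.1 + 1 = m) := by
  rcases h with rfl | rfl <;> rw [psucc_val] <;> split_ifs <;> omega

lemma Fin.val_sub_eq_ite {m : ℕ} (p k : Fin m) :
    (p - k).1 = if k ≤ p then p.1 - k.1 else m + p.1 - k.1 := by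
  split_ifs with h
  · exact Fin.coe_sub_iff_le.2 h
  · exact Fin.coe_sub_iff_lt.2 (not_le.1 h)

lemma cyclicMap_sub_right {m : ℕ} (k : Fin m) : CyclicMap fun p : Fin m => p - k := by
  intro a b p
  have := a.2; have := b.2; have := p.2
  simp only [arc, Fin.val_sub_eq_ite, Fin.le_def]
  split_ifs <;> simp only [decide_eq_decide] <;> omega

lemma psucc_sub {m : ℕ} (w k : Fin m) : psucc (w - k) = psucc w - k := by
  have := w.2; have := k.2
  ext
  simp only [psucc_val, Fin.val_sub_eq_ite, Fin.le_def]
  split_ifs <;> omega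

section AdjacentPositions

variable {m : ℕ} {u v a b p q : Fin m}

lemma arc_congr_point (h : adjPos u v) (hau : a ≠ u) (hav : a ≠ v) (hbu : b ≠ u)
    (hbv : b ≠ v) : arc a b u = arc a b v := by
  have := h.val_cases; have := u.2; have := v.2
  simp only [ne_eq, Fin.ext_iff] at *
  unfold arc; split_ifs <;> simp only [decide_eq_decide] <;> omega

lemma arc_congr_left (h : adjPos u v) (hbu : b ≠ u) (hbv : b ≠ v) (hpu : p ≠ u)
    (hpv : p ≠ v) : arc u b p = arc v b p := by
  have := h.val_cases; have := u.2; have := v.2; have := b.2; have := p.2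
  simp only [ne_eq, Fin.ext_iff] at *
  unfold arc; split_ifs <;> simp only [decide_eq_decide] <;> omega

lemma arc_congr_right (h : adjPos u v) (hau : a ≠ u) (hav : a ≠ v) (hpu : p ≠ u)
    (hpv : p ≠ v) : arc a u p = arc a v p := by
  have := h.val_cases; have := u.2; have := v.2; have := a.2; have := p.2
  simp only [ne_eq, Fin.ext_iff] at *
  unfold arc; split_ifs <;> simp only [decide_eq_decide] <;> omega

lemma arc_congr_ends {a' b' : Fin m} (ha : adjPos a a') (hb : adjPos b b') (hba : b ≠ a)
    (hba' : b ≠ a') (hab' : a' ≠ b') (hpa : p ≠ a) (hpa' : p ≠ a') (hpb : p ≠ b)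
    (hpb' : p ≠ b') : arc a b p = arc a' b' p :=
  (arc_congr_left ha hba hba' hpa hpa').trans (arc_congr_right hb hba'.symm hab' hpb hpb')

/-- The arc between adjacent positions contains either no other position or all of them. -/
lemma arc_adjPos_const (h : adjPos u v) (hpu : p ≠ u) (hpv : p ≠ v) (hqu : q ≠ u)
    (hqv : q ≠ v) : arc u v p = arc u v q := by
  have := h.val_cases; have := p.2; have := q.2
  simp only [ne_eq, Fin.ext_iff] at *
  unfold arc; split_ifs <;> simp only [decide_eq_decide] <;> omega

end AdjacentPositions

lemma Fintype.sum_eq_sum_add_sum_of_injective {α β M : Type*} [Fintype α] [Fintype β]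
    [DecidableEq β] [AddCommMonoid M] {e : α → β} (he : e.Injective) {S : Finset β}
    (hS : ∀ i, e i ∉ S) (hcard : Fintype.card β = Fintype.card α + S.card) (g : β → M) :
    ∑ t, g t = ∑ t ∈ S, g t + ∑ i, g (e i) := by
  have hdisj : Disjoint S (Finset.univ.map ⟨e, he⟩) :=
    Finset.disjoint_left.2 fun t ht h' => by
      obtain ⟨i, -, rfl⟩ := Finset.mem_map.1 h'
      exact hS i ht
  have huniv : S.disjUnion _ hdisj = Finset.univ :=
    Finset.eq_univ_of_card _ (by
      rw [Finset.card_disjUnion, Finset.card_map, Finset.card_univ, hcard, add_comm])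
  rw [← huniv, Finset.sum_disjUnion, Finset.sum_map]
  rfl

namespace GaussDiagram

section Basic

variable {G : GaussDiagram}

def contrib (G : GaussDiagram) (c t : Fin G.n) : ℤ :=
  arcWeight (G.sign t) (G.head c) (G.foot c) (G.head t) (G.foot t)

@[simp]
lemma contrib_self (c : Fin G.n) : G.contrib c c = 0 := by
  simp [contrib, arcWeight]

lemma crosses_of_ne {c t : Fin G.n} (h : t ≠ c) : G.crosses c t =
    (arc (G.head c) (G.foot c) (G.head t) != arc (G.head c) (G.foot c) (G.foot t)) := by
  simp [crosses, h]

lemma parity_eq_sum_contrib (c : Fin G.n) : G.parity c = ∑ t, G.contrib c t := by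
  refine Finset.sum_congr rfl fun t _ => ?_
  rcases eq_or_ne t c with rfl | h
  · simp [crosses]
  · rw [crosses_of_ne h, inter, contrib, arcWeight]
    cases arc (G.head c) (G.foot c) (G.head t) <;>
      cases arc (G.head c) (G.foot c) (G.foot t) <;> simp

lemma cardATuple_eq_prod_cardA (G : GaussDiagram) {k : ℕ} (Z : Fin k → ℤ) :
    G.cardATuple Z = ∏ j, G.cardA (Z j) := by
  simp only [cardATuple, cardA, Fintype.prod_sum, Finset.prod_ite_zero, Finset.mem_univ,
    forall_const]

namespace Proper

lemma head_injective (hG : G.Proper) : Function.Injective G.head :=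
  fun i j h => Sum.inl_injective (hG.1 (a₁ := .inl i) (a₂ := .inl j) h)

lemma foot_injective (hG : G.Proper) : Function.Injective G.foot :=
  fun i j h => Sum.inr_injective (hG.1 (a₁ := .inr i) (a₂ := .inr j) h)

lemma head_ne_foot (hG : G.Proper) (i j : Fin G.n) : G.head i ≠ G.foot j :=
  fun e => Sum.inl_ne_inr (hG.1 (a₁ := .inl i) (a₂ := .inr j) e)

lemma foot_ne_head (hG : G.Proper) (i j : Fin G.n) : G.foot i ≠ G.head j :=
  (hG.head_ne_foot j i).symm

end Proper

end Basic

structure IsEmbedding (G G' : GaussDiagram) (e : Fin G.n → Fin G'.n)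
    (φ : Fin (2 * G.n) → Fin (2 * G'.n)) : Prop where
  injective : e.Injective
  cyclic : CyclicMap φ
  head_eq : ∀ i, G'.head (e i) = φ (G.head i)
  foot_eq : ∀ i, G'.foot (e i) = φ (G.foot i)
  sign_eq : ∀ i, G'.sign (e i) = G.sign i

namespace IsEmbedding

variable {G G' : GaussDiagram} {e : Fin G.n → Fin G'.n} {φ : Fin (2 * G.n) → Fin (2 * G'.n)}

lemma contrib_eq (h : IsEmbedding G G' e φ) (c t : Fin G.n) :
    G'.contrib (e c) (e t) = G.contrib c t := by
  rw [contrib, contrib, h.sign_eq, h.head_eq, h.head_eq, h.foot_eq, h.foot_eq]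
  exact arcWeight_congr _ (h.cyclic _ _ _).symm (h.cyclic _ _ _).symm

lemma crosses_eq (h : IsEmbedding G G' e φ) (c t : Fin G.n) :
    G'.crosses (e c) (e t) = G.crosses c t := by
  rcases eq_or_ne t c with rfl | htc
  · simp [crosses]
  · rw [crosses_of_ne htc, crosses_of_ne (h.injective.ne htc), h.head_eq, h.head_eq,
      h.foot_eq, h.foot_eq, ← h.cyclic, ← h.cyclic]

lemma parity_eq (h : IsEmbedding G G' e φ) {S : Finset (Fin G'.n)} (hS : ∀ i, e i ∉ S)
    (hcard : G'.n = G.n + S.card) {c : Fin G.n} (hnew : ∑ t ∈ S, G'.contrib (e c) t = 0) :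
    G'.parity (e c) = G.parity c := by
  rw [parity_eq_sum_contrib, parity_eq_sum_contrib,
    Fintype.sum_eq_sum_add_sum_of_injective h.injective hS (by simpa using hcard), hnew,
    zero_add]
  exact Finset.sum_congr rfl fun t _ => h.contrib_eq c t

lemma cardA_eq (h : IsEmbedding G G' e φ) {S : Finset (Fin G'.n)} (hS : ∀ i, e i ∉ S)
    (hcard : G'.n = G.n + S.card) (hpar : ∀ c, G'.parity (e c) = G.parity c) {i : ℤ}
    (hnew : ∑ t ∈ S, (if G'.parity t = i then G'.sign t else 0) = 0) :
    G.cardA i = G'.cardA i := by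
  rw [cardA, cardA, Fintype.sum_eq_sum_add_sum_of_injective h.injective hS
    (by simpa using hcard), hnew, zero_add]
  exact Finset.sum_congr rfl fun c _ => by rw [hpar, h.sign_eq]

end IsEmbedding

abbrev rotate (G : GaussDiagram) (k : Fin (2 * G.n)) : GaussDiagram where
  n := G.n
  head i := G.head i - k
  foot i := G.foot i - k
  sign := G.sign

lemma isEmbedding_rotate (G : GaussDiagram) (k : Fin (2 * G.n)) :
    IsEmbedding G (G.rotate k) id (· - k) :=
  ⟨Function.injective_id, cyclicMap_sub_right k, fun _ => rfl, fun _ => rfl, fun _ => rfl⟩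

lemma Proper.rotate {G : GaussDiagram} (hG : G.Proper) (k : Fin (2 * G.n)) :
    (G.rotate k).Proper := by
  have : NeZero (2 * G.n) := ⟨by have := k.2; omega⟩
  refine ⟨?_, hG.2⟩
  convert (sub_left_injective (b := k)).comp hG.1 using 1
  ext a; cases a <;> rfl

variable {G G' : GaussDiagram}

lemma parity_eq_zero_of_adjPos (hG : G.Proper) {y : Fin G.n}
    (hy : adjPos (G.head y) (G.foot y)) : G.parity y = 0 := by
  rw [parity_eq_sum_contrib]
  refine Finset.sum_eq_zero fun t _ => ?_
  rcases eq_or_ne t y with rfl | hty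
  · exact contrib_self t
  · exact arcWeight_eq_zero _ (arc_adjPos_const hy (hG.head_injective.ne hty) (hG.head_ne_foot t y)
      (hG.foot_ne_head t y) (hG.foot_injective.ne hty))

lemma contrib_eq_zero_of_adjPos (hG : G.Proper) {c y : Fin G.n}
    (hy : adjPos (G.head y) (G.foot y)) (hc : c ≠ y) : G.contrib c y = 0 :=
  arcWeight_eq_zero _ (arc_congr_point hy (hG.head_injective.ne hc) (hG.head_ne_foot c y)
    (hG.foot_ne_head c y) (hG.foot_injective.ne hc))

lemma cardA_eq_of_singleChordMove (h : SingleChordMove G G') {i : ℤ} (hi : i ≠ 0) :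
    G.cardA i = G'.cardA i := by
  obtain ⟨-, hG', hn, e, φ, y, he, hey, hφ, hmap, hy⟩ := h
  have hemb : IsEmbedding G G' e φ :=
    ⟨he, hφ, fun i => (hmap i).1, fun i => (hmap i).2.1, fun i => (hmap i).2.2⟩
  have hS : ∀ i, e i ∉ ({y} : Finset _) := by simpa using hey
  have hcard : G'.n = G.n + ({y} : Finset _).card := by simpa using hn
  refine hemb.cardA_eq hS hcard (fun c => hemb.parity_eq hS hcard ?_) ?_
  · rw [Finset.sum_singleton]
    exact contrib_eq_zero_of_adjPos hG' hy (hey c)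
  · rw [Finset.sum_singleton, parity_eq_zero_of_adjPos hG' hy, if_neg (Ne.symm hi)]

section Parallel

variable {y₁ y₂ : Fin G.n}

lemma contrib_add_contrib_eq_zero_of_parallel (hG : G.Proper)
    (hH : adjPos (G.head y₁) (G.head y₂)) (hF : adjPos (G.foot y₁) (G.foot y₂))
    (hs : G.sign y₁ = -G.sign y₂) {c : Fin G.n} (h₁ : c ≠ y₁) (h₂ : c ≠ y₂) :
    G.contrib c y₁ + G.contrib c y₂ = 0 := by
  rw [contrib, contrib, hs, arcWeight_congr (-G.sign y₂)
    (arc_congr_point hH (hG.head_injective.ne h₁) (hG.head_injective.ne h₂) (hG.foot_ne_head _ _)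
      (hG.foot_ne_head _ _))
    (arc_congr_point hF (hG.head_ne_foot _ _) (hG.head_ne_foot _ _) (hG.foot_injective.ne h₁)
      (hG.foot_injective.ne h₂)), arcWeight, arcWeight]
  ring

lemma parity_eq_parity_of_parallel (hG : G.Proper) (hH : adjPos (G.head y₁) (G.head y₂))
    (hF : adjPos (G.foot y₁) (G.foot y₂)) (hs : G.sign y₁ = -G.sign y₂) (hne : y₁ ≠ y₂) :
    G.parity y₁ = G.parity y₂ := by
  rw [parity_eq_sum_contrib, parity_eq_sum_contrib, ← Finset.sum_add_sum_compl {y₁, y₂},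
    ← Finset.sum_add_sum_compl {y₁, y₂} (G.contrib y₂)]
  congr 1
  · rw [Finset.sum_pair hne, Finset.sum_pair hne, contrib_self, contrib_self, contrib, contrib,
      hs, arcWeight_swap _ (Fin.val_ne_of_ne (hG.head_injective.ne hne))
        (Fin.val_ne_of_ne (hG.head_ne_foot _ _)) (Fin.val_ne_of_ne (hG.foot_ne_head _ _))
        (Fin.val_ne_of_ne (hG.foot_injective.ne hne)), arcWeight, arcWeight]
    ring
  · refine Finset.sum_congr rfl fun t ht => ?_
    simp only [Finset.mem_compl, Finset.mem_insert, Finset.mem_singleton, not_or] at ht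
    exact arcWeight_congr _
      (arc_congr_ends hH hF (hG.foot_ne_head _ _) (hG.foot_ne_head _ _) (hG.head_ne_foot _ _)
        (hG.head_injective.ne ht.1) (hG.head_injective.ne ht.2) (hG.head_ne_foot _ _)
        (hG.head_ne_foot _ _))
      (arc_congr_ends hH hF (hG.foot_ne_head _ _) (hG.foot_ne_head _ _) (hG.head_ne_foot _ _)
        (hG.foot_ne_head _ _) (hG.foot_ne_head _ _) (hG.foot_injective.ne ht.1)
        (hG.foot_injective.ne ht.2))

end Parallel

lemma cardA_eq_of_twoChordMove (h : TwoChordMove G G') (i : ℤ) : G.cardA i = G'.cardA i := by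
  obtain ⟨-, hG', hn, e, φ, y₁, y₂, he, hne, hey, hφ, hmap, hH, hF, hs⟩ := h
  have hemb : IsEmbedding G G' e φ :=
    ⟨he, hφ, fun i => (hmap i).1, fun i => (hmap i).2.1, fun i => (hmap i).2.2⟩
  have hS : ∀ i, e i ∉ ({y₁, y₂} : Finset _) := by simpa using hey
  have hcard : G'.n = G.n + ({y₁, y₂} : Finset _).card := by simp [hn, hne]
  refine hemb.cardA_eq hS hcard (fun c => hemb.parity_eq hS hcard ?_) ?_
  · rw [Finset.sum_pair hne]
    exact contrib_add_contrib_eq_zero_of_parallel hG' hH hF hs (hey c).1 (hey c).2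
  · rw [Finset.sum_pair hne, parity_eq_parity_of_parallel hG' hH hF hs hne, hs]
    split_ifs <;> ring

/-- The triangle move on `x y z` before the relabelling `e, φ` of `TriangleMove`; an `abbrev`, so
that its chords are reducibly those of `G`. -/
abbrev triangleSlide (G : GaussDiagram) (x y z : Fin G.n) : GaussDiagram where
  n := G.n
  head k := if k = x then G.head y else if k = y then G.head x else if k = z then G.foot y
    else G.head k
  foot k := if k = x then G.foot z else if k = y then G.head z else if k = z then G.foot x
    else G.foot k
  sign := G.sign

section TriangleSlide

variable {x y z : Fin G.n}

lemma triangleSlide_x : (G.triangleSlide x y z).head x = G.head y ∧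
    (G.triangleSlide x y z).foot x = G.foot z := by
  simp

lemma triangleSlide_y (hxy : x ≠ y) : (G.triangleSlide x y z).head y = G.head x ∧
    (G.triangleSlide x y z).foot y = G.head z := by
  simp [hxy.symm]

lemma triangleSlide_z (hxz : x ≠ z) (hyz : y ≠ z) : (G.triangleSlide x y z).head z = G.foot y ∧
    (G.triangleSlide x y z).foot z = G.foot x := by
  simp [hxz.symm, hyz.symm]

lemma triangleSlide_of_ne {k : Fin G.n} (hx : k ≠ x) (hy : k ≠ y) (hz : k ≠ z) :
    (G.triangleSlide x y z).head k = G.head k ∧ (G.triangleSlide x y z).foot k = G.foot k := by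
  simp [hx, hy, hz]

lemma isEmbedding_triangleSlide_rotate (k : Fin (2 * G.n)) :
    IsEmbedding (G.triangleSlide x y z) ((G.rotate k).triangleSlide x y z) id (· - k) := by
  refine ⟨Function.injective_id, cyclicMap_sub_right k, fun i => ?_, fun i => ?_, fun _ => rfl⟩ <;>
    simp only [triangleSlide, id] <;> split_ifs <;> rfl

end TriangleSlide

end GaussDiagram

namespace TriangleVertices

variable {G : GaussDiagram} {x y z : Fin G.n} {w₁ w₂ w₃ : Fin (2 * G.n)}

lemma adjPos_head (h : TriangleVertices G x y z w₁ w₂ w₃) : adjPos (G.head x) (G.head y) := by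
  obtain ⟨-, -, -, ⟨hx, hy⟩ | ⟨hx, hy⟩, -, -⟩ := h <;> rw [hx, hy]
  exacts [Or.inl rfl, Or.inr rfl]

lemma adjPos_foot (h : TriangleVertices G x y z w₁ w₂ w₃) : adjPos (G.foot x) (G.foot z) := by
  obtain ⟨-, -, -, -, ⟨hx, hz⟩ | ⟨hx, hz⟩, -⟩ := h <;> rw [hx, hz]
  exacts [Or.inl rfl, Or.inr rfl]

lemma adjPos_mixed (h : TriangleVertices G x y z w₁ w₂ w₃) : adjPos (G.foot y) (G.head z) := by
  obtain ⟨-, -, -, -, -, ⟨hy, hz⟩ | ⟨hy, hz⟩⟩ := h <;> rw [hy, hz]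
  exacts [Or.inl rfl, Or.inr rfl]

lemma rotate (h : TriangleVertices G x y z w₁ w₂ w₃) (k : Fin (2 * G.n)) :
    TriangleVertices (G.rotate k) x y z (w₁ - k) (w₂ - k) (w₃ - k) := by
  obtain ⟨hxy, hyz, hxz, h₁, h₂, h₃⟩ := h
  refine ⟨hxy, hyz, hxz, ?_, ?_, ?_⟩
  · rcases h₁ with ⟨ha, hb⟩ | ⟨ha, hb⟩ <;> simp [ha, hb, psucc_sub]
  · rcases h₂ with ⟨ha, hb⟩ | ⟨ha, hb⟩ <;> simp [ha, hb, psucc_sub]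
  · rcases h₃ with ⟨ha, hb⟩ | ⟨ha, hb⟩ <;> simp [ha, hb, psucc_sub]

lemma val_normal_form (hG : G.Proper) (h : TriangleVertices G x y z w₁ w₂ w₃)
    (hw₁ : w₁.1 = 0) :
    (((G.head x).1 = 0 ∧ (G.head y).1 = 1) ∨ ((G.head x).1 = 1 ∧ (G.head y).1 = 0)) ∧
    ((G.foot z).1 = (G.foot x).1 + 1 ∨ (G.foot x).1 = (G.foot z).1 + 1) ∧
    ((G.head z).1 = (G.foot y).1 + 1 ∨ (G.foot y).1 = (G.head z).1 + 1) ∧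
    (2 ≤ (G.foot x).1 ∧ 2 ≤ (G.foot z).1 ∧ 2 ≤ (G.foot y).1 ∧ 2 ≤ (G.head z).1) ∧
    (max (G.foot x).1 (G.foot z).1 < min (G.foot y).1 (G.head z).1 ∨
      max (G.foot y).1 (G.head z).1 < min (G.foot x).1 (G.foot z).1) := by
  have hF := h.adjPos_foot.val_cases
  have hM := h.adjPos_mixed.val_cases
  obtain ⟨hxy, hyz, hxz, hH, -, -⟩ := h
  have h01 : (psucc w₁).1 = 1 := by rw [psucc_val, hw₁, if_neg (by have := x.2; omega)]
  have hH' : ((G.head x).1 = 0 ∧ (G.head y).1 = 1) ∨ ((G.head x).1 = 1 ∧ (G.head y).1 = 0) := by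
    rcases hH with ⟨h1, h2⟩ | ⟨h1, h2⟩ <;> simp [h1, h2, h01, hw₁]
  have hd : ∀ i j : Fin G.n, (G.head i).1 ≠ (G.foot j).1 :=
    fun i j => Fin.val_ne_of_ne (hG.head_ne_foot i j)
  -- each `omega` below only gets the disequalities it needs, to keep its case split small
  have hF' : (G.foot z).1 = (G.foot x).1 + 1 ∨ (G.foot x).1 = (G.foot z).1 + 1 := by
    have := hd x z; have := hd y z; have := hd x x; have := hd y x; clear hM; omega
  have hM' : (G.head z).1 = (G.foot y).1 + 1 ∨ (G.foot y).1 = (G.head z).1 + 1 := by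
    have := hd x y; have := hd y y; have := Fin.val_ne_of_ne (hG.head_injective.ne hxz)
    have := Fin.val_ne_of_ne (hG.head_injective.ne hyz); clear hF hF'; omega
  clear hF hM
  refine ⟨hH', hF', hM', ?_, ?_⟩
  · have := hd x z; have := hd y z; have := hd x x; have := hd y x; have := hd x y
    have := hd y y; have := Fin.val_ne_of_ne (hG.head_injective.ne hxz)
    have := Fin.val_ne_of_ne (hG.head_injective.ne hyz)
    omega
  · have := Fin.val_ne_of_ne (hG.foot_injective.ne hxy)
    have := Fin.val_ne_of_ne (hG.foot_injective.ne hyz.symm)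
    have := hd z x; have := hd z z
    omega

end TriangleVertices

namespace GaussDiagram

variable {G G' : GaussDiagram} {x y z : Fin G.n} {w₁ w₂ w₃ : Fin (2 * G.n)}

/-- In each of the sixteen normal forms `omega` decides every `arc` involved, and the admissible
signs balance the contributions. -/
lemma sum_contrib_triangleSlide_of_val_eq_zero (hG : G.Proper)
    (htv : TriangleVertices G x y z w₁ w₂ w₃) (hw₁ : w₁.1 = 0)
    (hadm : AdmissibleSigns G (G.triangleSlide x y z) x y z x y z) {c : Fin G.n}
    (hc : c ∈ ({x, y, z} : Finset (Fin G.n))) :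
    ∑ t ∈ ({x, y, z} : Finset (Fin G.n)), (G.triangleSlide x y z).contrib c t =
      ∑ t ∈ {x, y, z}, G.contrib c t := by
  obtain ⟨hH, hF, hM, hlo, hsep⟩ := htv.val_normal_form hG hw₁
  obtain ⟨hxy, hyz, hxz, -⟩ := htv
  simp only [Finset.mem_insert, Finset.mem_singleton] at hc
  -- all three chords at once, so that `hadm` is evaluated once per configuration
  suffices h : ∀ c, c = x ∨ c = y ∨ c = z → (G.triangleSlide x y z).contrib c x +
      ((G.triangleSlide x y z).contrib c y + (G.triangleSlide x y z).contrib c z) =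
      G.contrib c x + (G.contrib c y + G.contrib c z) by
    simpa only [Finset.sum_insert, Finset.mem_insert, Finset.mem_singleton, hxy, hxz, hyz,
      or_self, not_false_eq_true, Finset.sum_singleton] using h c hc
  simp only [forall_eq_or_imp, forall_eq]
  simp only [AdmissibleSigns, crosses_of_ne hxy.symm, crosses_of_ne hyz.symm,
    crosses_of_ne hxz.symm, crosses_of_ne (G := G.triangleSlide x y z) hxy.symm,
    crosses_of_ne (G := G.triangleSlide x y z) hyz.symm,
    crosses_of_ne (G := G.triangleSlide x y z) hxz.symm] at hadm
  simp only [contrib, hxy.symm, hyz.symm, hxz.symm, ↓reduceIte] at hadm ⊢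
  revert hadm
  generalize (G.head x).1 = hx at *
  generalize (G.head y).1 = hy at *
  generalize (G.head z).1 = hz at *
  generalize (G.foot x).1 = fx at *
  generalize (G.foot y).1 = fy at *
  generalize (G.foot z).1 = fz at *
  rcases hH with ⟨rfl, rfl⟩ | ⟨rfl, rfl⟩ <;> rcases hF with rfl | rfl <;>
    rcases hM with rfl | rfl <;> rcases hsep with hsep | hsep <;>
    simp (disch := omega) only [arc, arcWeight, if_pos, if_neg, decide_eq_true, decide_eq_false,
      ↓reduceIte, bne_self_eq_false, Bool.bne_false, Bool.bne_true, Bool.not_false,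
      Bool.false_eq_true, Bool.true_eq_false, false_and, and_false, or_false, false_or, true_and,
      and_true] <;>
    omega

lemma sum_contrib_triangleSlide (hG : G.Proper) (htv : TriangleVertices G x y z w₁ w₂ w₃)
    (hadm : AdmissibleSigns G (G.triangleSlide x y z) x y z x y z) {c : Fin G.n}
    (hc : c ∈ ({x, y, z} : Finset (Fin G.n))) :
    ∑ t ∈ ({x, y, z} : Finset (Fin G.n)), (G.triangleSlide x y z).contrib c t =
      ∑ t ∈ {x, y, z}, G.contrib c t := by
  have hR := isEmbedding_rotate G w₁
  have hRs := isEmbedding_triangleSlide_rotate (x := x) (y := y) (z := z) w₁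
  have hcontrib : ∀ c t, (G.rotate w₁).contrib c t = G.contrib c t := hR.contrib_eq
  have hcontrib' : ∀ c t, ((G.rotate w₁).triangleSlide x y z).contrib c t =
      (G.triangleSlide x y z).contrib c t := hRs.contrib_eq
  have hcrosses : ∀ c t, (G.rotate w₁).crosses c t = G.crosses c t := hR.crosses_eq
  have hcrosses' : ∀ c t, ((G.rotate w₁).triangleSlide x y z).crosses c t =
      (G.triangleSlide x y z).crosses c t := hRs.crosses_eq
  have key := sum_contrib_triangleSlide_of_val_eq_zero (hG.rotate w₁) (htv.rotate w₁)
    (by simp [Fin.val_sub_eq_ite]) (by simpa only [AdmissibleSigns, hcrosses, hcrosses'] using hadm)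
    hc
  simpa only [hcontrib, hcontrib'] using key

/-- Away from the triangle, every endpoint moves at most to an adjacent position without
passing an endpoint of the other chord. -/
lemma contrib_triangleSlide_of_left_not_mem (hG : G.Proper)
    (htv : TriangleVertices G x y z w₁ w₂ w₃) {c : Fin G.n}
    (hc : c ∉ ({x, y, z} : Finset (Fin G.n))) (t : Fin G.n) :
    (G.triangleSlide x y z).contrib c t = G.contrib c t := by
  have hH := htv.adjPos_head
  have hF := htv.adjPos_foot
  have hM := htv.adjPos_mixed
  obtain ⟨hxy, hyz, hxz, -⟩ := htv
  have hyx := hxy.symm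
  have hzy := hyz.symm
  have hzx := hxz.symm
  simp only [Finset.mem_insert, Finset.mem_singleton, not_or] at hc
  obtain ⟨hcx, hcy, hcz⟩ := hc
  rw [contrib, contrib, (triangleSlide_of_ne hcx hcy hcz).1, (triangleSlide_of_ne hcx hcy hcz).2]
  rcases eq_or_ne t x with rfl | htx
  · rw [triangleSlide_x.1, triangleSlide_x.2]
    refine arcWeight_congr _ (arc_congr_point hH.symm ?_ ?_ ?_ ?_)
      (arc_congr_point hF.symm ?_ ?_ ?_ ?_) <;>
    simp [hG.head_injective.eq_iff, hG.foot_injective.eq_iff, hG.head_ne_foot, hG.foot_ne_head, *]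
  rcases eq_or_ne t y with rfl | hty
  · rw [(triangleSlide_y hxy).1, (triangleSlide_y hxy).2]
    refine arcWeight_congr _ (arc_congr_point hH ?_ ?_ ?_ ?_)
      (arc_congr_point hM.symm ?_ ?_ ?_ ?_) <;>
    simp [hG.head_injective.eq_iff, hG.foot_injective.eq_iff, hG.head_ne_foot, hG.foot_ne_head, *]
  rcases eq_or_ne t z with rfl | htz
  · rw [(triangleSlide_z hxz hyz).1, (triangleSlide_z hxz hyz).2]
    refine arcWeight_congr _ (arc_congr_point hM ?_ ?_ ?_ ?_)
      (arc_congr_point hF ?_ ?_ ?_ ?_) <;>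
    simp [hG.head_injective.eq_iff, hG.foot_injective.eq_iff, hG.head_ne_foot, hG.foot_ne_head, *]
  rw [(triangleSlide_of_ne htx hty htz).1, (triangleSlide_of_ne htx hty htz).2]

lemma contrib_triangleSlide_of_right_not_mem (hG : G.Proper)
    (htv : TriangleVertices G x y z w₁ w₂ w₃) (c : Fin G.n) {t : Fin G.n}
    (ht : t ∉ ({x, y, z} : Finset (Fin G.n))) :
    (G.triangleSlide x y z).contrib c t = G.contrib c t := by
  by_cases hc : c ∈ ({x, y, z} : Finset (Fin G.n))
  swap
  · exact contrib_triangleSlide_of_left_not_mem hG htv hc t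
  have hH := htv.adjPos_head
  have hF := htv.adjPos_foot
  have hM := htv.adjPos_mixed
  obtain ⟨hxy, hyz, hxz, -⟩ := htv
  have hyx := hxy.symm
  have hzy := hyz.symm
  have hzx := hxz.symm
  simp only [Finset.mem_insert, Finset.mem_singleton, not_or] at hc ht
  obtain ⟨htx, hty, htz⟩ := ht
  rw [contrib, contrib, (triangleSlide_of_ne htx hty htz).1, (triangleSlide_of_ne htx hty htz).2]
  rcases hc with rfl | rfl | rfl
  · rw [triangleSlide_x.1, triangleSlide_x.2]
    refine arcWeight_congr _ (arc_congr_ends hH.symm hF.symm ?_ ?_ ?_ ?_ ?_ ?_ ?_)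
      (arc_congr_ends hH.symm hF.symm ?_ ?_ ?_ ?_ ?_ ?_ ?_) <;>
    simp [hG.head_injective.eq_iff, hG.foot_injective.eq_iff, hG.head_ne_foot, hG.foot_ne_head, *]
  · rw [(triangleSlide_y hxy).1, (triangleSlide_y hxy).2]
    refine arcWeight_congr _ (arc_congr_ends hH hM.symm ?_ ?_ ?_ ?_ ?_ ?_ ?_)
      (arc_congr_ends hH hM.symm ?_ ?_ ?_ ?_ ?_ ?_ ?_) <;>
    simp [hG.head_injective.eq_iff, hG.foot_injective.eq_iff, hG.head_ne_foot, hG.foot_ne_head, *]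
  · rw [(triangleSlide_z hxz hyz).1, (triangleSlide_z hxz hyz).2]
    refine arcWeight_congr _ (arc_congr_ends hM hF ?_ ?_ ?_ ?_ ?_ ?_ ?_)
      (arc_congr_ends hM hF ?_ ?_ ?_ ?_ ?_ ?_ ?_) <;>
    simp [hG.head_injective.eq_iff, hG.foot_injective.eq_iff, hG.head_ne_foot, hG.foot_ne_head, *]

lemma parity_triangleSlide (hG : G.Proper) (htv : TriangleVertices G x y z w₁ w₂ w₃)
    (hadm : AdmissibleSigns G (G.triangleSlide x y z) x y z x y z) (c : Fin G.n) :
    (G.triangleSlide x y z).parity c = G.parity c := by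
  rw [parity_eq_sum_contrib, parity_eq_sum_contrib,
    ← Finset.sum_add_sum_compl ({x, y, z} : Finset (Fin G.n)),
    ← Finset.sum_add_sum_compl ({x, y, z} : Finset (Fin G.n)) (G.contrib c)]
  congr 1
  · by_cases hc : c ∈ ({x, y, z} : Finset (Fin G.n))
    · exact sum_contrib_triangleSlide hG htv hadm hc
    · exact Finset.sum_congr rfl fun t _ => contrib_triangleSlide_of_left_not_mem hG htv hc t
  · exact Finset.sum_congr rfl fun t ht =>
      contrib_triangleSlide_of_right_not_mem hG htv c (Finset.mem_compl.1 ht)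

lemma cardA_eq_of_triangleMove (h : TriangleMove G G') (i : ℤ) : G.cardA i = G'.cardA i := by
  obtain ⟨hG, -, e, φ, x, y, z, w₁, w₂, w₃, he, -, hφ, htv, hsign, hold, hslide, hadm⟩ := h
  have hemb : IsEmbedding (G.triangleSlide x y z) G' e φ := by
    refine ⟨he.1, hφ, fun k => ?_, fun k => ?_, hsign⟩ <;>
    · by_cases hkx : k = x
      · simp [hkx, hslide]
      by_cases hky : k = y
      · simp [hky, hslide, htv.1.symm]
      by_cases hkz : k = z
      · simp [hkz, hslide, htv.2.1.symm, htv.2.2.1.symm]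
      simp [hold k hkx hky hkz, hkx, hky, hkz]
  have hadm' : AdmissibleSigns G (G.triangleSlide x y z) x y z x y z := by
    simpa only [AdmissibleSigns, hemb.crosses_eq] using hadm
  have hcard : G'.n = G.n + (∅ : Finset (Fin G'.n)).card := by
    simpa using (Fintype.card_of_bijective he).symm
  rw [← hemb.cardA_eq (fun _ => Finset.notMem_empty _) hcard
    (fun c => hemb.parity_eq (fun _ => Finset.notMem_empty _) hcard (by simp)) (by simp)]
  exact Finset.sum_congr rfl fun c _ => by rw [parity_triangleSlide hG htv hadm' c]

lemma cardA_eq_of_gaussMove (h : GaussMove G G') {i : ℤ} (hi : i ≠ 0) :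
    G.cardA i = G'.cardA i := by
  rcases h with h | h | h | h | h | h
  · exact cardA_eq_of_singleChordMove h hi
  · exact (cardA_eq_of_singleChordMove h hi).symm
  · exact cardA_eq_of_twoChordMove h i
  · exact (cardA_eq_of_twoChordMove h i).symm
  · exact cardA_eq_of_triangleMove h i
  · exact (cardA_eq_of_triangleMove h i).symm

end GaussDiagram

theorem cardATuple_invariant_general {n : ℕ} (Z : Fin n → ℤ)
    (hZ : ∀ j, Z j ≠ 0) (G G' : GaussDiagram)
    (h : Relation.ReflTransGen GaussMove G G') :
    G.cardATuple Z = G'.cardATuple Z := by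
  induction h with
  | refl => rfl
  | tail _ hmove ih =>
    rw [ih, GaussDiagram.cardATuple_eq_prod_cardA, GaussDiagram.cardATuple_eq_prod_cardA]
    exact Finset.prod_congr rfl fun j _ => GaussDiagram.cardA_eq_of_gaussMove hmove (hZ j)

/-- For `Z = (z₁, …, z_n)` with `n ≥ 1`, all `z_j ≠ 0` and
`z_j < z_{j+1}`, the signed cardinality `|A_Z|` is unchanged by a single chord move, a two
chord move or a triangle move — hence by any finite sequence of chord moves. -/
theorem cardATuple_invariant {n : ℕ} (hn : 1 ≤ n) (Z : Fin n → ℤ)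
    (hZ : ∀ j, Z j ≠ 0) (hmono : StrictMono Z) (G G' : GaussDiagram)
    (h : Relation.ReflTransGen GaussMove G G') :
    G.cardATuple Z = G'.cardATuple Z :=
  cardATuple_invariant_general Z hZ G G' h
end

section
/- Let Z = (z_1, …, z_n) with 0 < z_1 < … < z_n. Then the invariant |V_Z| is a Vassiliev invariant of degree at most n in the following combinatorial sense: for every Gauss diagram G, every m ≥ n + 1, and every choice of m distinct chords x_1, …, x_m of G, one has Σ_{ε ∈ {±1}^m} (ε_1 ε_2 ⋯ ε_m) · |V_Z(G_{(ε, x̄)})| = 0, where G_{(ε, x̄)} is the Gauss diagram obtained from G by flipping (interchanging head and foot and negating the sign of) each chord x_i with ε_i = −1. -/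
/-! Flipping chords changes every parity at most by a sign, so `|V_Z|` of a flipped diagram is
the sum over the same tuples of chords, each weighted by the product of the flipped signs of its
entries. A tuple has at most `n < m` entries, so some chord `x i₀` occurs in none of them, and
toggling `i₀` in the flipping set leaves every term unchanged while reversing `(-1) ^ #s`. -/

open Finset

theorem Finset.sum_neg_one_pow_card_mul_eq_zero {α R : Type*} [Fintype α] [DecidableEq α]
    [Ring R] (a : α) (f : Finset α → R) (hf : ∀ s, a ∉ s → f (insert a s) = f s) :
    ∑ s : Finset α, (-1 : R) ^ #s * f s = 0 := by
  rw [← powerset_univ, ← insert_erase (mem_univ a), sum_powerset_insert (notMem_erase a _),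
    ← sum_add_distrib]
  refine sum_eq_zero fun s hs => ?_
  have ha : a ∉ s := fun h => notMem_erase a _ (mem_powerset.mp hs h)
  rw [card_insert_of_notMem ha, hf s ha, pow_succ, mul_neg_one, neg_mul, add_neg_cancel]

theorem arc_swap {a b p : ℕ} (hab : a ≠ b) (hpa : p ≠ a) (hpb : p ≠ b) :
    arc b a p = !arc a b p := by
  unfold arc
  split <;> split <;> simp only [← decide_not, decide_eq_decide] <;> omega

namespace GaussDiagram

variable {G : GaussDiagram}

theorem Proper.head_injective_s11 (hG : G.Proper) : Function.Injective G.head :=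
  fun _ _ h => Sum.inl_injective (hG.1 h)

theorem Proper.foot_injective_s11 (hG : G.Proper) : Function.Injective G.foot :=
  fun _ _ h => Sum.inr_injective (hG.1 h)

theorem Proper.head_ne_foot_s11 (hG : G.Proper) (i j : Fin G.n) : G.head i ≠ G.foot j :=
  fun h => Sum.inl_ne_inr (hG.1 h)

theorem Proper.arc_foot_head_head (hG : G.Proper) {c x : Fin G.n} (hxc : x ≠ c) :
    arc (G.foot c).1 (G.head c).1 (G.head x).1 = !arc (G.head c).1 (G.foot c).1 (G.head x).1 :=
  arc_swap (Fin.val_ne_of_ne (hG.head_ne_foot_s11 c c))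
    (Fin.val_ne_of_ne (hG.head_injective_s11.ne hxc)) (Fin.val_ne_of_ne (hG.head_ne_foot_s11 x c))

theorem Proper.arc_foot_head_foot (hG : G.Proper) {c x : Fin G.n} (hxc : x ≠ c) :
    arc (G.foot c).1 (G.head c).1 (G.foot x).1 = !arc (G.head c).1 (G.foot c).1 (G.foot x).1 :=
  arc_swap (Fin.val_ne_of_ne (hG.head_ne_foot_s11 c c))
    (Fin.val_ne_of_ne (hG.head_ne_foot_s11 c x).symm) (Fin.val_ne_of_ne (hG.foot_injective_s11.ne hxc))

@[simp] theorem head_flipSet (S : Finset (Fin G.n)) (c : Fin G.n) :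
    (G.flipSet S).head c = if c ∈ S then G.foot c else G.head c := rfl

@[simp] theorem foot_flipSet (S : Finset (Fin G.n)) (c : Fin G.n) :
    (G.flipSet S).foot c = if c ∈ S then G.head c else G.foot c := rfl

theorem crosses_flipSet (hG : G.Proper) (S : Finset (Fin G.n)) (c x : Fin G.n) :
    (G.flipSet S).crosses c x = G.crosses c x := by
  by_cases hxc : x = c
  · subst hxc
    simp only [crosses, bne_self_eq_false, Bool.false_and]
    exact Bool.and_eq_false_iff.mpr (.inl (bne_self_eq_false x))
  unfold crosses
  congr 1
  rw [head_flipSet, foot_flipSet, head_flipSet, foot_flipSet]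
  split_ifs <;>
    simp only [hG.arc_foot_head_head hxc, hG.arc_foot_head_foot hxc, Bool.not_bne_not,
      bne_comm]

@[simp] theorem sign_flipSet (S : Finset (Fin G.n)) (c : Fin G.n) :
    (G.flipSet S).sign c = if c ∈ S then -G.sign c else G.sign c := rfl

theorem ne_of_crosses {c x : Fin G.n} (h : G.crosses c x) : x ≠ c := by
  simp_all [crosses]

theorem arc_foot_of_crosses {c x : Fin G.n} (h : G.crosses c x) :
    arc (G.head c).1 (G.foot c).1 (G.foot x).1 = !arc (G.head c).1 (G.foot c).1 (G.head x).1 := by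
  simp only [crosses, Bool.and_eq_true, bne_iff_ne] at h
  revert h
  cases arc (G.head c).1 (G.foot c).1 (G.head x).1 <;> simp

/-- Flipping `x` moves its head to the other side of `c` and negates its sign, so only the flip
of `c` itself is visible. -/
theorem sign_mul_inter_flipSet (hG : G.Proper) (S : Finset (Fin G.n)) {c x : Fin G.n}
    (h : G.crosses c x) :
    (G.flipSet S).sign x * (G.flipSet S).inter c x
      = (if c ∈ S then -1 else 1) * (G.sign x * G.inter c x) := by
  unfold inter
  rw [sign_flipSet, head_flipSet, foot_flipSet, head_flipSet]
  by_cases hc : c ∈ S <;> by_cases hx : x ∈ S <;>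
    simp only [hc, hx, if_true, if_false, hG.arc_foot_head_head (ne_of_crosses h),
      hG.arc_foot_head_foot (ne_of_crosses h), arc_foot_of_crosses h] <;>
    cases arc (G.head c).1 (G.foot c).1 (G.head x).1 <;> simp

theorem parity_flipSet (hG : G.Proper) (S : Finset (Fin G.n)) (c : Fin G.n) :
    (G.flipSet S).parity c = (if c ∈ S then -1 else 1) * G.parity c := by
  unfold parity
  rw [mul_sum]
  refine sum_congr rfl fun x _ => ?_
  rw [← crosses_flipSet hG S c x]
  by_cases h : (G.flipSet S).crosses c x
  · rw [if_pos h, if_pos h]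
    exact sign_mul_inter_flipSet hG S ((crosses_flipSet hG S c x).symm.trans h)
  · rw [if_neg h, if_neg h, mul_zero]

theorem abs_parity_flipSet (hG : G.Proper) (S : Finset (Fin G.n)) (c : Fin G.n) :
    |(G.flipSet S).parity c| = |G.parity c| := by
  rw [parity_flipSet hG, abs_mul]
  split_ifs <;> simp

theorem sign_flipSet_insert_of_ne (S : Finset (Fin G.n)) {a c : Fin G.n} (h : c ≠ a) :
    (G.flipSet (insert a S)).sign c = (G.flipSet S).sign c := by
  simp [h]

theorem cardVTuple_flipSet (hG : G.Proper) (S : Finset (Fin G.n)) {k : ℕ} (Z : Fin k → ℤ) :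
    (G.flipSet S).cardVTuple Z
      = ∑ t : Fin k → Fin G.n,
          if ∀ j, |G.parity (t j)| = Z j then ∏ j, (G.flipSet S).sign (t j) else 0 :=
  sum_congr rfl fun t _ =>
    if_congr (forall_congr' fun j => iff_of_eq (congrArg (· = Z j) (abs_parity_flipSet hG S (t j))))
      rfl rfl

end GaussDiagram

theorem cardVTuple_vassiliev_general {n : ℕ} (Z : Fin n → ℤ) (G : GaussDiagram) (hG : G.Proper)
    (m : ℕ) (hm : n + 1 ≤ m) (x : Fin m → Fin G.n) (hx : Function.Injective x) :
    ∑ s : Finset (Fin m), (-1 : ℤ) ^ s.card * (G.flipSet (s.image x)).cardVTuple Z = 0 := by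
  simp_rw [GaussDiagram.cardVTuple_flipSet hG, mul_sum]
  rw [sum_comm]
  refine sum_eq_zero fun t _ => ?_
  have hcard : #(univ.image t) < #(univ.image x) := by
    rw [card_image_of_injective _ hx, card_univ, Fintype.card_fin]
    exact card_image_le.trans_lt (by simpa using hm)
  obtain ⟨_, hx₀, hi₀⟩ := exists_mem_notMem_of_card_lt_card hcard
  obtain ⟨i₀, -, rfl⟩ := mem_image.mp hx₀
  have hne : ∀ j, t j ≠ x i₀ := fun j h => hi₀ (h ▸ mem_image_of_mem t (mem_univ j))
  refine sum_neg_one_pow_card_mul_eq_zero i₀ _ fun s _ => ?_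
  rw [image_insert]
  congr 1
  exact prod_congr rfl fun j _ => GaussDiagram.sign_flipSet_insert_of_ne _ (hne j)

/-- `|V_Z|` is a Vassiliev invariant of degree at most `n`: for every
Gauss diagram `G`, every `m ≥ n + 1` and every choice of `m` distinct chords
`x₁, …, x_m` of `G`, the alternating sum over all `2^m` resolutions (each resolution
flipping — interchanging head and foot and negating the sign of — the chords `x_j` with
`ε_j = -1`, i.e. with `j` in the flipping set `s`) of `|V_Z|` vanishes. -/
theorem cardVTuple_vassiliev {n : ℕ} (Z : Fin n → ℤ) (hpos : ∀ j, 0 < Z j)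
    (hmono : StrictMono Z) (G : GaussDiagram) (hG : G.Proper)
    (m : ℕ) (hm : n + 1 ≤ m) (x : Fin m → Fin G.n) (hx : Function.Injective x) :
    ∑ s : Finset (Fin m), (-1 : ℤ) ^ s.card * (G.flipSet (s.image x)).cardVTuple Z = 0 :=
  cardVTuple_vassiliev_general Z G hG m hm x hx
end
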